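/- The map O_R : [0,1) → [0,1) defined by O_R(x) = 1/(2⌊1/(1−x)⌋ + 1 − 1/(1−x)) is uniquely ergodic: there exists exactly one O_R-invariant Borel probability measure on [0,1). -/

import Mathlib

open MeasureTheory Set
open scoped ENNReal

/-- The odometer associated to the backward continued fraction (Renyi) map:
`O_R(x) = 1/(2⌊1/(1−x)⌋ + 1 − 1/(1−x))`. -/
noncomputable def renyiOdometer (x : ℝ) : ℝ :=
  1 / (2 * (⌊1 / (1 - x)⌋ : ℝ) + 1 - 1 / (1 - x))

namespace RO

noncomputable def sm (x : ℝ) : ℝ := x / (1 + x)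
noncomputable def um (x : ℝ) : ℝ := 1 / (2 - x)
noncomputable def sig (x : ℝ) : ℝ := if x < 1/2 then x / (1 - x) else 2 - 1/x

lemma sm_mem {a : ℝ} (h : a ∈ Ico (0:ℝ) 1) : sm a ∈ Ico (0:ℝ) (1/2) := by
  obtain ⟨h0, h1⟩ := h
  rw [sm]
  constructor
  · exact div_nonneg h0 (by linarith)
  · rw [div_lt_iff₀ (by linarith : (0:ℝ) < 1 + a)]; linarith

lemma um_mem {a : ℝ} (h : a ∈ Ico (0:ℝ) 1) : um a ∈ Ico (1/2:ℝ) 1 := by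
  obtain ⟨h0, h1⟩ := h
  rw [um]
  constructor
  · rw [le_div_iff₀ (by linarith : (0:ℝ) < 2 - a)]; linarith
  · rw [div_lt_one (by linarith : (0:ℝ) < 2 - a)]; linarith

lemma sig_sm {a : ℝ} (h : a ∈ Ico (0:ℝ) 1) : sig (sm a) = a := by
  obtain ⟨h0, h1⟩ := h
  have hm := sm_mem ⟨h0, h1⟩
  rw [sig, if_pos hm.2]
  rw [sm]
  have h1a : (0:ℝ) < 1 + a := by linarith
  field_simp; ring

lemma sig_um {a : ℝ} (h : a ∈ Ico (0:ℝ) 1) : sig (um a) = a := by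
  obtain ⟨h0, h1⟩ := h
  have hm := um_mem ⟨h0, h1⟩
  rw [sig, if_neg (not_lt.2 hm.1)]
  rw [um]
  have h2a : (0:ℝ) < 2 - a := by linarith
  field_simp; ring

lemma sm_sig {x : ℝ} (h : x ∈ Ico (0:ℝ) (1/2)) : sig x ∈ Ico (0:ℝ) 1 ∧ sm (sig x) = x := by
  obtain ⟨h0, h1⟩ := h
  have hx1 : (0:ℝ) < 1 - x := by linarith
  have hs : sig x = x / (1 - x) := by rw [sig, if_pos h1]
  refine ⟨⟨?_, ?_⟩, ?_⟩
  · rw [hs]; exact div_nonneg h0 hx1.le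
  · rw [hs, div_lt_one hx1]; linarith
  · rw [hs, sm]
    have : 1 + x / (1 - x) = 1/(1-x) := by field_simp; ring
    rw [this]
    field_simp

lemma um_sig {x : ℝ} (h : x ∈ Ico (1/2:ℝ) 1) : sig x ∈ Ico (0:ℝ) 1 ∧ um (sig x) = x := by
  obtain ⟨h0, h1⟩ := h
  have hx0 : (0:ℝ) < x := by linarith
  have hs : sig x = 2 - 1/x := by rw [sig, if_neg (not_lt.2 h0)]
  have hinv : 1/x > 1 := by rw [gt_iff_lt, lt_div_iff₀ hx0]; linarith
  have hinv2 : 1/x ≤ 2 := by rw [div_le_iff₀ hx0]; linarith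
  refine ⟨⟨by linarith, by linarith⟩, ?_⟩
  rw [hs, um]
  have : 2 - (2 - 1/x) = 1/x := by ring
  rw [this]
  field_simp

lemma sig_mem {x : ℝ} (h : x ∈ Ico (0:ℝ) 1) : sig x ∈ Ico (0:ℝ) 1 := by
  rcases lt_or_ge x (1/2) with hc | hc
  · exact (sm_sig ⟨h.1, hc⟩).1
  · exact (um_sig ⟨hc, h.2⟩).1

lemma sm_strictMonoOn : StrictMonoOn sm (Icc (0:ℝ) 1) := by
  intro a ha b hb hab
  rw [sm, sm, div_lt_div_iff₀ (by linarith [ha.1]) (by linarith [hb.1])]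
  nlinarith [ha.1]

lemma um_strictMonoOn : StrictMonoOn um (Icc (0:ℝ) 1) := by
  intro a ha b hb hab
  obtain ⟨ha1, ha2⟩ := ha
  obtain ⟨hb1, hb2⟩ := hb
  rw [um, um, div_lt_div_iff₀ (by linarith : (0:ℝ) < 2 - a) (by linarith : (0:ℝ) < 2 - b)]
  linarith

lemma sm_zero : sm 0 = 0 := by rw [sm]; norm_num
lemma sm_one : sm 1 = 1/2 := by rw [sm]; norm_num
lemma um_zero : um 0 = 1/2 := by rw [um]; norm_num
lemma um_one : um 1 = 1 := by rw [um]; norm_num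

/-- floor of 1/(1-x) basic facts -/
lemma floor_facts {x : ℝ} (h : x ∈ Ico (0:ℝ) 1) :
    1 ≤ ⌊1/(1-x)⌋ ∧ (⌊1/(1-x)⌋ : ℝ) ≤ 1/(1-x) ∧ 1/(1-x) < (⌊1/(1-x)⌋ : ℝ) + 1 := by
  obtain ⟨h0, h1⟩ := h
  have hx1 : (0:ℝ) < 1 - x := by linarith
  have ht : (1:ℝ) ≤ 1/(1-x) := by rw [le_div_iff₀ hx1]; linarith
  refine ⟨?_, Int.floor_le _, Int.lt_floor_add_one _⟩
  exact_mod_cast Int.le_floor.2 (by exact_mod_cast ht)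

lemma T_mem {x : ℝ} (h : x ∈ Ico (0:ℝ) 1) : renyiOdometer x ∈ Ico (0:ℝ) 1 ∧ 0 < renyiOdometer x := by
  obtain ⟨hm1, hub, hlb⟩ := floor_facts h
  set t := 1/(1-x) with ht
  set m : ℤ := ⌊1/(1-x)⌋ with hm
  have hmR : (1:ℝ) ≤ (m:ℝ) := by exact_mod_cast hm1
  have hD : (m:ℝ) < 2*(m:ℝ) + 1 - t := by linarith
  have hD1 : (0:ℝ) < 2*(m:ℝ) + 1 - t := by linarith
  have hT : renyiOdometer x = 1/(2*(m:ℝ) + 1 - t) := rfl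
  have hpos : 0 < renyiOdometer x := by rw [hT]; positivity
  refine ⟨⟨hpos.le, ?_⟩, hpos⟩
  rw [hT, div_lt_one hD1]; linarith

lemma T_sm {a : ℝ} (h : a ∈ Ico (0:ℝ) 1) : renyiOdometer (sm a) = um a := by
  obtain ⟨h0, h1⟩ := h
  have h1a : (0:ℝ) < 1 + a := by linarith
  have hx : 1 - sm a = 1/(1+a) := by rw [sm]; field_simp; ring
  have hinv : 1/(1 - sm a) = 1 + a := by rw [hx]; field_simp
  have hfl : ⌊1/(1 - sm a)⌋ = 1 := by
    rw [hinv, Int.floor_eq_iff]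
    push_cast; constructor <;> linarith
  rw [renyiOdometer, hfl, hinv, um]
  push_cast; ring_nf

lemma T_um {a : ℝ} (h : a ∈ Ico (0:ℝ) 1) : renyiOdometer (um a) = sm (renyiOdometer a) := by
  obtain ⟨h0, h1⟩ := h
  have h2a : (0:ℝ) < 2 - a := by linarith
  have h1a : (0:ℝ) < 1 - a := by linarith
  have hx : 1 - um a = (1-a)/(2-a) := by rw [um]; field_simp; ring
  have hinv : 1/(1 - um a) = 1 + 1/(1-a) := by rw [hx]; field_simp; ring
  have hfl : ⌊1/(1 - um a)⌋ = 1 + ⌊1/(1-a)⌋ := by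
    rw [hinv, add_comm]
    rw [show (1:ℝ) = ((1:ℤ):ℝ) from by norm_num]
    rw [Int.floor_add_intCast]
    ring
  obtain ⟨hm1, hub, hlb⟩ := floor_facts ⟨h0, h1⟩
  set m : ℤ := ⌊1/(1-a)⌋ with hm
  have hmR : (1:ℝ) ≤ (m:ℝ) := by exact_mod_cast hm1
  have hD1 : (0:ℝ) < 2*(m:ℝ) + 1 - 1/(1-a) := by linarith
  have hTa : renyiOdometer a = 1/(2*(m:ℝ) + 1 - 1/(1-a)) := rfl
  rw [renyiOdometer, hfl, hinv, hTa, sm]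
  push_cast
  set u := 1/(1-a) with hu
  set E : ℝ := 2*(m:ℝ) + 1 - u with hE
  have hEpos : 0 < E := hD1
  have h1 : 2 * ((1:ℝ) + (m:ℝ)) + 1 - (1 + u) = E + 1 := by rw [hE]; ring
  rw [h1]
  have hE1 : (0:ℝ) < E + 1 := by linarith
  have h2 : (1:ℝ) + 1/E = (E+1)/E := by field_simp
  rw [h2]
  rw [div_div_div_eq]
  rw [one_mul]
  rw [div_eq_div_iff hE1.ne' (by positivity)]
  ring

/-- endpoints of Stern-Brocot cylinders; head of word = coarsest digit -/
noncomputable def pts : List Bool → ℝ × ℝ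
  | [] => (0, 1)
  | (b :: w) => ((bif b then um else sm) (pts w).1, (bif b then um else sm) (pts w).2)

noncomputable def cyl (w : List Bool) : Set ℝ := Ico (pts w).1 (pts w).2

lemma pts_bdd : ∀ w : List Bool, 0 ≤ (pts w).1 ∧ (pts w).1 < (pts w).2 ∧ (pts w).2 ≤ 1
  | [] => by norm_num [pts]
  | (b :: w) => by
      obtain ⟨h0, h12, h21⟩ := pts_bdd w
      have hm1 : (pts w).1 ∈ Icc (0:ℝ) 1 := ⟨h0, by linarith⟩
      have hm2 : (pts w).2 ∈ Icc (0:ℝ) 1 := ⟨by linarith, h21⟩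
      cases b
      · simp only [pts, cond_false]
        refine ⟨?_, sm_strictMonoOn hm1 hm2 h12, ?_⟩
        · have := sm_mem (a := (pts w).1) ⟨h0, by linarith⟩; exact this.1
        · rcases eq_or_lt_of_le h21 with h | h
          · rw [h, sm_one]; norm_num
          · have := sm_mem (a := (pts w).2) ⟨by linarith, h⟩; linarith [this.2]
      · simp only [pts, cond_true]
        refine ⟨?_, um_strictMonoOn hm1 hm2 h12, ?_⟩
        · have := um_mem (a := (pts w).1) ⟨h0, by linarith⟩; linarith [this.1]
        · rcases eq_or_lt_of_le h21 with h | h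
          · rw [h, um_one]
          · have := um_mem (a := (pts w).2) ⟨by linarith, h⟩; exact this.2.le

lemma cyl_subset (w : List Bool) : cyl w ⊆ Ico (0:ℝ) 1 := by
  obtain ⟨h0, h12, h21⟩ := pts_bdd w
  intro x hx
  exact ⟨le_trans h0 hx.1, lt_of_lt_of_le hx.2 h21⟩

lemma cyl_nil : cyl [] = Ico (0:ℝ) 1 := rfl

lemma pts_mem_Icc (w : List Bool) : (pts w).1 ∈ Icc (0:ℝ) 1 ∧ (pts w).2 ∈ Icc (0:ℝ) 1 := by
  obtain ⟨h0, h12, h21⟩ := pts_bdd w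
  exact ⟨⟨h0, by linarith⟩, ⟨by linarith, h21⟩⟩

/-- membership in a cons-cylinder, false case -/
lemma mem_cyl_false {w : List Bool} {x : ℝ} (hx : x ∈ Ico (0:ℝ) (1/2)) :
    x ∈ cyl (false :: w) ↔ sig x ∈ cyl w := by
  obtain ⟨hs1, hs2⟩ := sm_sig hx
  obtain ⟨hp1, hp2⟩ := pts_mem_Icc w
  have hsx : sig x ∈ Icc (0:ℝ) 1 := ⟨hs1.1, hs1.2.le⟩
  constructor
  · rintro ⟨h1, h2⟩
    simp only [pts, cond_false] at h1 h2
    rw [← hs2] at h1 h2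
    exact ⟨(sm_strictMonoOn.le_iff_le hp1 hsx).1 h1, (sm_strictMonoOn.lt_iff_lt hsx hp2).1 h2⟩
  · rintro ⟨h1, h2⟩
    constructor
    · simp only [pts, cond_false]
      rw [← hs2]
      exact (sm_strictMonoOn.le_iff_le hp1 hsx).2 h1
    · simp only [pts, cond_false]
      rw [← hs2]
      exact (sm_strictMonoOn.lt_iff_lt hsx hp2).2 h2

lemma mem_cyl_true {w : List Bool} {x : ℝ} (hx : x ∈ Ico (1/2:ℝ) 1) :
    x ∈ cyl (true :: w) ↔ sig x ∈ cyl w := by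
  obtain ⟨hs1, hs2⟩ := um_sig hx
  obtain ⟨hp1, hp2⟩ := pts_mem_Icc w
  have hsx : sig x ∈ Icc (0:ℝ) 1 := ⟨hs1.1, hs1.2.le⟩
  constructor
  · rintro ⟨h1, h2⟩
    simp only [pts, cond_true] at h1 h2
    rw [← hs2] at h1 h2
    exact ⟨(um_strictMonoOn.le_iff_le hp1 hsx).1 h1, (um_strictMonoOn.lt_iff_lt hsx hp2).1 h2⟩
  · rintro ⟨h1, h2⟩
    constructor
    · simp only [pts, cond_true]
      rw [← hs2]
      exact (um_strictMonoOn.le_iff_le hp1 hsx).2 h1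
    · simp only [pts, cond_true]
      rw [← hs2]
      exact (um_strictMonoOn.lt_iff_lt hsx hp2).2 h2

lemma cyl_false_subset (w : List Bool) : cyl (false :: w) ⊆ Ico (0:ℝ) (1/2) := by
  intro x hx
  obtain ⟨hp1, hp2⟩ := pts_mem_Icc w
  obtain ⟨h1, h2⟩ := hx
  simp only [pts, cond_false] at h1 h2
  have hl : 0 ≤ sm (pts w).1 := div_nonneg hp1.1 (by linarith [hp1.1])
  have hr : sm (pts w).2 ≤ sm 1 :=
    sm_strictMonoOn.monotoneOn hp2 (by norm_num : (1:ℝ) ∈ Icc (0:ℝ) 1) hp2.2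
  rw [sm_one] at hr
  exact ⟨le_trans hl h1, lt_of_lt_of_le h2 hr⟩

lemma cyl_true_subset (w : List Bool) : cyl (true :: w) ⊆ Ico (1/2:ℝ) 1 := by
  intro x hx
  obtain ⟨hp1, hp2⟩ := pts_mem_Icc w
  obtain ⟨h1, h2⟩ := hx
  simp only [pts, cond_true] at h1 h2
  have hl : um 0 ≤ um (pts w).1 :=
    um_strictMonoOn.monotoneOn (by norm_num : (0:ℝ) ∈ Icc (0:ℝ) 1) hp1 hp1.1
  rw [um_zero] at hl
  have hr : um (pts w).2 ≤ um 1 :=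
    um_strictMonoOn.monotoneOn hp2 (by norm_num : (1:ℝ) ∈ Icc (0:ℝ) 1) hp2.2
  rw [um_one] at hr
  exact ⟨le_trans hl h1, lt_of_lt_of_le h2 hr⟩

noncomputable def dig (x : ℝ) : Bool := if 1/2 ≤ x then true else false

noncomputable def wd : ℕ → ℝ → List Bool
  | 0, _ => []
  | (n+1), x => dig x :: wd n (sig x)

@[simp] lemma wd_length (n : ℕ) (x : ℝ) : (wd n x).length = n := by
  induction n generalizing x with
  | zero => rfl
  | succ n ih => simp [wd, ih]

lemma mem_cyl_wd {x : ℝ} (hx : x ∈ Ico (0:ℝ) 1) (n : ℕ) : x ∈ cyl (wd n x) := by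
  induction n generalizing x with
  | zero => exact hx
  | succ n ih =>
      rcases lt_or_ge x (1/2) with hc | hc
      · have hd : dig x = false := by rw [dig, if_neg (not_le.2 hc)]
        rw [wd, hd]
        exact (mem_cyl_false ⟨hx.1, hc⟩).2 (ih (sig_mem hx))
      · have hd : dig x = true := by rw [dig, if_pos hc]
        rw [wd, hd]
        exact (mem_cyl_true ⟨hc, hx.2⟩).2 (ih (sig_mem hx))

lemma wd_eq_of_mem_cyl {x : ℝ} (hx : x ∈ Ico (0:ℝ) 1) :
    ∀ w : List Bool, x ∈ cyl w → wd w.length x = w := by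
  intro w
  induction w generalizing x with
  | nil => intro _; rfl
  | cons b w ih =>
      intro hmem
      cases b
      · have hhalf := cyl_false_subset w hmem
        have hd : dig x = false := by rw [dig, if_neg (not_le.2 hhalf.2)]
        have hs := (mem_cyl_false hhalf).1 hmem
        have hsI : sig x ∈ Ico (0:ℝ) 1 := sig_mem hx
        simp only [List.length_cons, wd, hd]
        rw [ih hsI hs]
      · have hhalf := cyl_true_subset w hmem
        have hd : dig x = true := by rw [dig, if_pos hhalf.1]
        have hs := (mem_cyl_true hhalf).1 hmem
        have hsI : sig x ∈ Ico (0:ℝ) 1 := sig_mem hx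
        simp only [List.length_cons, wd, hd]
        rw [ih hsI hs]

lemma cyl_eq_of_mem {x : ℝ} {w w' : List Bool} (hl : w.length = w'.length)
    (h1 : x ∈ cyl w) (h2 : x ∈ cyl w') : w = w' := by
  have hx : x ∈ Ico (0:ℝ) 1 := cyl_subset w h1
  rw [← wd_eq_of_mem_cyl hx w h1]
  rw [hl]
  exact wd_eq_of_mem_cyl hx w' h2

def wN : ℕ → ℕ → List Bool
  | 0, _ => []
  | (n+1), m => (decide (m % 2 = 1)) :: wN n (m / 2)

@[simp] lemma wN_length (n m : ℕ) : (wN n m).length = n := by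
  induction n generalizing m with
  | zero => rfl
  | succ n ih => simp [wN, ih]

def wVal : List Bool → ℕ
  | [] => 0
  | (b :: w) => 2 * wVal w + (bif b then 1 else 0)

lemma wVal_wN {n m : ℕ} (h : m < 2^n) : wVal (wN n m) = m := by
  induction n generalizing m with
  | zero => simp at h; simp [h, wN, wVal]
  | succ n ih =>
      have hdiv : m / 2 < 2^n := by
        rw [Nat.div_lt_iff_lt_mul (by norm_num : 0 < 2)]
        calc m < 2^(n+1) := h
        _ = 2^n * 2 := by ring
      rw [wN, wVal, ih hdiv]
      rcases Nat.mod_two_eq_zero_or_one m with h2 | h2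
      · rw [h2]; norm_num
        omega
      · rw [h2]; norm_num
        omega

lemma wN_inj {n m m' : ℕ} (hm : m < 2^n) (hm' : m' < 2^n) (h : wN n m = wN n m') : m = m' := by
  rw [← wVal_wN hm, ← wVal_wN hm', h]

lemma wN_surj : ∀ w : List Bool, ∃ m, m < 2^(w.length) ∧ wN w.length m = w := by
  intro w
  induction w with
  | nil => exact ⟨0, by norm_num, rfl⟩
  | cons b w ih =>
      obtain ⟨m, hm, hw⟩ := ih
      refine ⟨2*m + (bif b then 1 else 0), ?_, ?_⟩
      · cases b <;> simp only [cond_true, cond_false] <;>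
          · simp only [List.length_cons, pow_succ]; omega
      · cases b
        · simp only [cond_false, Nat.add_zero, List.length_cons, wN]
          have hh : decide (2*m % 2 = 1) = false := by simp [Nat.mul_mod_right]
          rw [hh, Nat.mul_div_cancel_left m (by norm_num : 0 < 2), hw]
        · simp only [cond_true, List.length_cons, wN]
          have h1 : (2*m+1) % 2 = 1 := by omega
          have hh : decide ((2*m+1) % 2 = 1) = true := by simp [h1]
          have hq : (2*m+1) / 2 = m := by omega
          rw [hh, hq, hw]

def wsucc : List Bool → List Bool
  | [] => []
  | (false :: w) => true :: w
  | (true :: w) => false :: wsucc w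

@[simp] lemma wsucc_length (w : List Bool) : (wsucc w).length = w.length := by
  induction w with
  | nil => rfl
  | cons b w ih => cases b <;> simp [wsucc, ih]

lemma wsucc_wN {n m : ℕ} (h : m + 1 < 2^n) : wsucc (wN n m) = wN n (m+1) := by
  induction n generalizing m with
  | zero => simp at h
  | succ n ih =>
      rcases Nat.mod_two_eq_zero_or_one m with h2 | h2
      · have hd : decide (m % 2 = 1) = false := by simp [h2]
        rw [wN, hd, wsucc]
        have : wN (n+1) (m+1) = (decide ((m+1) % 2 = 1)) :: wN n ((m+1)/2) := rfl
        rw [this]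
        have h1 : (m+1) % 2 = 1 := by omega
        have h2' : (m+1)/2 = m/2 := by omega
        rw [h1, h2']
        simp
      · have hd : decide (m % 2 = 1) = true := by simp [h2]
        rw [wN, hd, wsucc]
        have : wN (n+1) (m+1) = (decide ((m+1) % 2 = 1)) :: wN n ((m+1)/2) := rfl
        rw [this]
        have h1 : (m+1) % 2 = 0 := by omega
        have h2' : (m+1)/2 = m/2 + 1 := by omega
        rw [h1, h2']
        have hrec : m/2 + 1 < 2^n := by
          have : m + 1 < 2^n * 2 := by rw [← pow_succ]; exact h
          omega
        rw [ih hrec]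
        simp

lemma wsucc_wN_last (n : ℕ) : wsucc (wN n (2^n - 1)) = wN n 0 := by
  induction n with
  | zero => rfl
  | succ n ih =>
      have hB : 1 ≤ 2^n := Nat.one_le_two_pow
      have h1 : (2^(n+1) - 1) % 2 = 1 := by
        have : 2^(n+1) = 2 * 2^n := by rw [pow_succ]; ring
        omega
      have h2 : (2^(n+1) - 1) / 2 = 2^n - 1 := by
        have : 2^(n+1) = 2 * 2^n := by rw [pow_succ]; ring
        omega
      have hd : decide ((2^(n+1) - 1) % 2 = 1) = true := by simp [h1]
      rw [wN, hd, h2, wsucc, ih]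
      rfl

lemma pre (w : List Bool) : ∀ x ∈ Ico (0:ℝ) 1,
    (renyiOdometer x ∈ cyl (wsucc w) ↔ x ∈ cyl w) := by
  induction w with
  | nil =>
      intro x hx
      exact ⟨fun _ => hx, fun _ => (T_mem hx).1⟩
  | cons b w ih =>
      intro x hx
      cases b
      · -- w = false :: w, wsucc = true :: w
        rw [show wsucc (false :: w) = true :: w from rfl]
        rcases lt_or_ge x (1/2) with hc | hc
        · have hs := sm_sig ⟨hx.1, hc⟩
          have hTx : renyiOdometer x = um (sig x) := by
            conv_lhs => rw [← hs.2]
            exact T_sm hs.1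
          rw [hTx]
          rw [mem_cyl_true (um_mem hs.1), sig_um hs.1]
          rw [mem_cyl_false ⟨hx.1, hc⟩]
        · constructor
          · intro h
            exfalso
            have hu := um_sig ⟨hc, hx.2⟩
            have hTx : renyiOdometer x = sm (renyiOdometer (sig x)) := by
              conv_lhs => rw [← hu.2]
              exact T_um hu.1
            have := cyl_true_subset w h
            rw [hTx] at this
            have := (sm_mem (T_mem hu.1).1).2
            linarith [this, (cyl_true_subset w h).1]
          · intro h
            exfalso
            have := (cyl_false_subset w h).2
            linarith
      · -- w = true :: w, wsucc = false :: wsucc w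
        rw [show wsucc (true :: w) = false :: wsucc w from rfl]
        rcases lt_or_ge x (1/2) with hc | hc
        · constructor
          · intro h
            exfalso
            have hs := sm_sig ⟨hx.1, hc⟩
            have hTx : renyiOdometer x = um (sig x) := by
              conv_lhs => rw [← hs.2]
              exact T_sm hs.1
            have := (cyl_false_subset (wsucc w) h).2
            rw [hTx] at this
            linarith [(um_mem hs.1).1]
          · intro h
            exfalso
            have := (cyl_true_subset w h).1
            linarith
        · have hu := um_sig ⟨hc, hx.2⟩
          have hTx : renyiOdometer x = sm (renyiOdometer (sig x)) := by
            conv_lhs => rw [← hu.2]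
            exact T_um hu.1
          have hTa := T_mem hu.1
          rw [hTx]
          rw [mem_cyl_false (sm_mem hTa.1), sig_sm hTa.1]
          rw [ih (sig x) hu.1]
          conv_rhs => rw [← hu.2]
          rw [mem_cyl_true (um_mem hu.1), sig_um hu.1]

lemma measurable_cyl (w : List Bool) : MeasurableSet (cyl w) := measurableSet_Ico

lemma measure_inter_I (μ : Measure ℝ) (hnull : μ (Ico (0:ℝ) 1)ᶜ = 0) (B : Set ℝ) :
    μ B = μ (B ∩ Ico (0:ℝ) 1) := by
  refine le_antisymm ?_ (measure_mono Set.inter_subset_left)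
  calc μ B ≤ μ ((B ∩ Ico (0:ℝ) 1) ∪ (Ico (0:ℝ) 1)ᶜ) := by
        apply measure_mono
        intro x hx
        by_cases hI : x ∈ Ico (0:ℝ) 1
        · exact Or.inl ⟨hx, hI⟩
        · exact Or.inr hI
  _ ≤ μ (B ∩ Ico (0:ℝ) 1) + μ (Ico (0:ℝ) 1)ᶜ := measure_union_le _ _
  _ = μ (B ∩ Ico (0:ℝ) 1) := by rw [hnull, add_zero]

lemma cyl_disjoint_wN {n m m' : ℕ} (hm : m < 2^n) (hm' : m' < 2^n) (hne : m ≠ m') :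
    Disjoint (cyl (wN n m)) (cyl (wN n m')) := by
  rw [Set.disjoint_left]
  intro x h1 h2
  exact hne (wN_inj hm hm' (cyl_eq_of_mem (by simp) h1 h2))

lemma iUnion_cyl (n : ℕ) : ⋃ m ∈ Finset.range (2^n), cyl (wN n m) = Ico (0:ℝ) 1 := by
  apply Set.Subset.antisymm
  · intro x hx
    simp only [Set.mem_iUnion] at hx
    obtain ⟨m, _, hmem⟩ := hx
    exact cyl_subset _ hmem
  · intro x hx
    obtain ⟨m, hm, hw⟩ := wN_surj (wd n x)
    rw [wd_length] at hm hw
    simp only [Set.mem_iUnion]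
    exact ⟨m, Finset.mem_range.2 hm, hw ▸ mem_cyl_wd hx n⟩

/-- key step: invariance gives equality of cylinder measures along the odometer successor -/
lemma measure_cyl_succ (μ : Measure ℝ) (hnull : μ (Ico (0:ℝ) 1)ᶜ = 0)
    (hinv : MeasurePreserving renyiOdometer μ μ) (w : List Bool) :
    μ (cyl (wsucc w)) = μ (cyl w) := by
  have h1 : μ (renyiOdometer ⁻¹' (cyl (wsucc w))) = μ (cyl (wsucc w)) :=
    hinv.measure_preimage (measurable_cyl _).nullMeasurableSet
  have h2 : renyiOdometer ⁻¹' (cyl (wsucc w)) ∩ Ico (0:ℝ) 1 = cyl w := by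
    ext x
    constructor
    · rintro ⟨hp, hI⟩
      exact (pre w x hI).1 hp
    · intro hx
      have hI := cyl_subset w hx
      exact ⟨(pre w x hI).2 hx, hI⟩
  rw [← h1, measure_inter_I μ hnull (renyiOdometer ⁻¹' (cyl (wsucc w))), h2]

lemma measure_cyl_const (μ : Measure ℝ) (hnull : μ (Ico (0:ℝ) 1)ᶜ = 0)
    (hinv : MeasurePreserving renyiOdometer μ μ) (n : ℕ) :
    ∀ m, m < 2^n → μ (cyl (wN n m)) = μ (cyl (wN n 0)) := by
  intro m
  induction m with
  | zero => intro _; rfl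
  | succ m ih =>
      intro hm
      have hm' : m < 2^n := by omega
      rw [← wsucc_wN hm, measure_cyl_succ μ hnull hinv, ih hm']

lemma measure_I_one (μ : Measure ℝ) [IsProbabilityMeasure μ] (hnull : μ (Ico (0:ℝ) 1)ᶜ = 0) :
    μ (Ico (0:ℝ) 1) = 1 := by
  have := measure_add_measure_compl (μ := μ) (measurableSet_Ico : MeasurableSet (Ico (0:ℝ) 1))
  rw [hnull, add_zero, measure_univ] at this
  exact this

lemma measure_cyl_of_invariant (μ : Measure ℝ) [IsProbabilityMeasure μ]
    (hnull : μ (Ico (0:ℝ) 1)ᶜ = 0) (hinv : MeasurePreserving renyiOdometer μ μ)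
    (w : List Bool) : μ (cyl w) = (2^w.length : ℝ≥0∞)⁻¹ := by
  set n := w.length with hn
  have hsum : ∑ m ∈ Finset.range (2^n), μ (cyl (wN n m)) = 1 := by
    rw [← measure_biUnion_finset ?_ (fun m _ => measurable_cyl _)]
    · rw [iUnion_cyl n]
      exact measure_I_one μ hnull
    · intro a ha b hb hab
      exact cyl_disjoint_wN (Finset.mem_range.1 ha) (Finset.mem_range.1 hb) hab
  have hconst : ∀ m ∈ Finset.range (2^n), μ (cyl (wN n m)) = μ (cyl (wN n 0)) :=
    fun m hm => measure_cyl_const μ hnull hinv n m (Finset.mem_range.1 hm)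
  rw [Finset.sum_congr rfl hconst, Finset.sum_const, Finset.card_range, nsmul_eq_mul] at hsum
  have h2n : ((2:ℝ≥0∞)^n) ≠ 0 := by positivity
  have h2n' : ((2:ℝ≥0∞)^n) ≠ ⊤ := by
    exact ENNReal.pow_ne_top (by norm_num)
  have hc : μ (cyl (wN n 0)) = (2^n : ℝ≥0∞)⁻¹ := by
    have hcast : ((2^n : ℕ) : ℝ≥0∞) = (2:ℝ≥0∞)^n := by push_cast; rfl
    rw [hcast] at hsum
    have := congrArg (fun z => ((2:ℝ≥0∞)^n)⁻¹ * z) hsum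
    simp only [← mul_assoc, ENNReal.inv_mul_cancel h2n h2n', one_mul, mul_one] at this
    exact this
  obtain ⟨m, hm, hw⟩ := wN_surj w
  rw [← hn] at hm hw
  rw [← hw, measure_cyl_const μ hnull hinv n m hm, hc]

lemma cyl_struct (w : List Bool) : ∃ p q r s : ℕ, 0 < q ∧ 0 < s ∧ r * q = p * s + 1 ∧
    w.length + 1 ≤ q * s ∧ (pts w).1 = p / q ∧ (pts w).2 = r / s := by
  induction w with
  | nil => exact ⟨0, 1, 1, 1, by norm_num, by norm_num, by norm_num, by norm_num,
      by norm_num [pts], by norm_num [pts]⟩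
  | cons b w ih =>
      obtain ⟨p, q, r, s, hq, hs, hdet, hbound, h1, h2⟩ := ih
      obtain ⟨ha0, hab, hb1⟩ := pts_bdd w
      have hqR : (0:ℝ) < q := by exact_mod_cast hq
      have hsR : (0:ℝ) < s := by exact_mod_cast hs
      have hab' : (p:ℝ)/q < (r:ℝ)/s := by rw [← h1, ← h2]; exact hab
      have hb1' : (r:ℝ)/s ≤ 1 := by rw [← h2]; exact hb1
      have hpq : p < q := by
        have h' : (p:ℝ)/q < 1 := lt_of_lt_of_le hab' hb1'
        rw [div_lt_one hqR] at h'
        exact_mod_cast h'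
      have hrs : r ≤ s := by
        have h' := hb1'
        rw [div_le_one hsR] at h'
        exact_mod_cast h'
      have hpqR : (p:ℝ) < q := by exact_mod_cast hpq
      have hrsR : (r:ℝ) ≤ s := by exact_mod_cast hrs
      cases b
      · -- sm branch: (p, p+q, r, r+s)
        refine ⟨p, p+q, r, r+s, by omega, by omega, ?_, ?_, ?_, ?_⟩
        · have e1 : r*(p+q) = r*p + r*q := by ring
          rw [e1, hdet]
          ring
        · have e1 : (p+q)*(r+s) = p*r + p*s + r*q + q*s := by ring
          rw [e1, hdet]
          simp only [List.length_cons]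
          omega
        · simp only [pts, cond_false, h1, sm]
          have e2 : ((p:ℝ)+q) ≠ 0 := by positivity
          have e2' : ((q:ℝ)+p) ≠ 0 := by positivity
          push_cast
          rw [eq_div_iff e2]
          field_simp
          ring
        · simp only [pts, cond_false, h2, sm]
          have e2 : ((r:ℝ)+s) ≠ 0 := by positivity
          have e2' : ((s:ℝ)+r) ≠ 0 := by positivity
          push_cast
          rw [eq_div_iff e2]
          field_simp
          ring
      · -- um branch: (q, 2q-p, s, 2s-r)
        have hp2q : p ≤ 2*q := by omega
        have hr2s : r ≤ 2*s := by omega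
        refine ⟨q, 2*q-p, s, 2*s-r, by omega, by omega, ?_, ?_, ?_, ?_⟩
        · zify [hp2q, hr2s]
          have h : (r:ℤ)*q = p*s+1 := by exact_mod_cast hdet
          linear_combination h
        · have h1' : q+1 ≤ 2*q-p := by omega
          have h2' : s ≤ 2*s-r := by omega
          have h3 : (q+1)*s ≤ (2*q-p)*(2*s-r) := Nat.mul_le_mul h1' h2'
          have h4 : (q+1)*s = q*s+s := by ring
          simp only [List.length_cons]
          omega
        · simp only [pts, cond_true, h1, um]
          rw [Nat.cast_sub hp2q]
          push_cast
          have hden : (0:ℝ) < 2 - (p:ℝ)/q := by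
            have : (p:ℝ)/q < 1 := by rw [div_lt_one hqR]; exact hpqR
            linarith
          have hden2 : (0:ℝ) < 2*(q:ℝ) - p := by linarith
          field_simp
          try ring
        · simp only [pts, cond_true, h2, um]
          rw [Nat.cast_sub hr2s]
          push_cast
          have hden : (0:ℝ) < 2 - (r:ℝ)/s := by
            have : (r:ℝ)/s ≤ 1 := hb1'
            linarith
          have hden2 : (0:ℝ) < 2*(s:ℝ) - r := by linarith
          field_simp
          try ring

lemma cyl_width (w : List Bool) : (pts w).2 - (pts w).1 ≤ 1/(w.length+1) := by
  obtain ⟨p, q, r, s, hq, hs, hdet, hbound, h1, h2⟩ := cyl_struct w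
  have hqR : (0:ℝ) < q := by exact_mod_cast hq
  have hsR : (0:ℝ) < s := by exact_mod_cast hs
  have hw : (pts w).2 - (pts w).1 = 1/((q:ℝ)*s) := by
    rw [h1, h2, div_sub_div _ _ hsR.ne' hqR.ne']
    have e : (r:ℝ)*q - s*p = 1 := by
      have : (r:ℝ)*q = p*s+1 := by exact_mod_cast hdet
      linarith [this]
    rw [e, mul_comm (s:ℝ) q]
  rw [hw]
  apply div_le_div_of_nonneg_left (by norm_num) (by positivity)
  exact_mod_cast hbound

lemma wd_succ_append (n : ℕ) (x : ℝ) : wd (n+1) x = wd n x ++ [dig (sig^[n] x)] := by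
  induction n generalizing x with
  | zero => rfl
  | succ n ih =>
      show dig x :: wd (n+1) (sig x) = (dig x :: wd n (sig x)) ++ [dig (sig^[n+1] x)]
      rw [ih (sig x), Function.iterate_succ_apply]
      rfl

lemma cyl_append_subset (w : List Bool) (b : Bool) : cyl (w ++ [b]) ⊆ cyl w := by
  intro x hx
  have hxI : x ∈ Ico (0:ℝ) 1 := cyl_subset _ hx
  have hlen : (w ++ [b]).length = w.length + 1 := by simp
  have heq : wd (w.length + 1) x = w ++ [b] := by
    rw [← hlen]; exact wd_eq_of_mem_cyl hxI _ hx
  rw [wd_succ_append] at heq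
  have hw : wd w.length x = w := List.append_inj_left heq (by simp)
  rw [← hw]
  exact mem_cyl_wd hxI _

lemma cyl_subset_children (w : List Bool) :
    cyl w ⊆ cyl (w ++ [false]) ∪ cyl (w ++ [true]) := by
  intro x hx
  have hxI : x ∈ Ico (0:ℝ) 1 := cyl_subset _ hx
  have hw : wd w.length x = w := wd_eq_of_mem_cyl hxI _ hx
  have hmem := mem_cyl_wd hxI (w.length + 1)
  rw [wd_succ_append, hw] at hmem
  cases hdig : dig (sig^[w.length] x)
  · rw [hdig] at hmem; exact Or.inl hmem
  · rw [hdig] at hmem; exact Or.inr hmem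

lemma pts_append_le (w : List Bool) (b : Bool) : (pts (w ++ [b])).2 ≤ (pts w).2 := by
  have hsub := cyl_append_subset w b
  obtain ⟨h0, h12, h21⟩ := pts_bdd (w ++ [b])
  rw [cyl, cyl, Set.Ico_subset_Ico_iff h12] at hsub
  exact hsub.2

/-- Two probability measures concentrated on [0,1) agreeing on all cylinders agree. -/
lemma ext_measures (μ ν : Measure ℝ) [IsProbabilityMeasure μ] [IsProbabilityMeasure ν]
    (hμ : μ (Ico (0:ℝ) 1)ᶜ = 0) (hν : ν (Ico (0:ℝ) 1)ᶜ = 0)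
    (h : ∀ w : List Bool, μ (cyl w) = ν (cyl w)) : μ = ν := by
  have stepA : ∀ x ∈ Icc (0:ℝ) 1, μ (Ico (0:ℝ) x) = ν (Ico (0:ℝ) x) := by
    intro x hx
    set U : ℕ → Set ℝ := fun n =>
      ⋃ m ∈ (Finset.range (2^n)).filter (fun m => (pts (wN n m)).2 ≤ x), cyl (wN n m) with hU
    have hUmeas : ∀ n, ∀ κ : Measure ℝ, κ (U n) = ∑ m ∈ (Finset.range (2^n)).filter
        (fun m => (pts (wN n m)).2 ≤ x), κ (cyl (wN n m)) := by
      intro n κ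
      rw [measure_biUnion_finset ?_ (fun m _ => measurable_cyl _)]
      intro a ha b hb hab
      exact cyl_disjoint_wN (Finset.mem_range.1 (Finset.mem_filter.1 ha).1)
        (Finset.mem_range.1 (Finset.mem_filter.1 hb).1) hab
    have hUeq : ∀ n, μ (U n) = ν (U n) := by
      intro n
      rw [hUmeas n μ, hUmeas n ν]
      exact Finset.sum_congr rfl (fun m _ => h _)
    have key : ∀ (n m : ℕ) (b : Bool), m < 2^n → (pts (wN n m)).2 ≤ x →
        ∀ y, y ∈ cyl (wN n m ++ [b]) → y ∈ U (n+1) := by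
      intro n m b hm hble y hc
      obtain ⟨m', hm', hw'⟩ := wN_surj (wN n m ++ [b])
      have hlen : (wN n m ++ [b]).length = n + 1 := by simp
      rw [hlen] at hm' hw'
      simp only [hU, Set.mem_iUnion]
      refine ⟨m', ?_, ?_⟩
      · rw [Finset.mem_filter, Finset.mem_range]
        refine ⟨hm', ?_⟩
        rw [hw']
        exact le_trans (pts_append_le (wN n m) b) hble
      · rw [hw']; exact hc
    have hUmono : Monotone U := by
      apply monotone_nat_of_le_succ
      intro n y hy
      simp only [hU, Set.mem_iUnion] at hy
      obtain ⟨m, hm, hmem⟩ := hy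
      rw [Finset.mem_filter, Finset.mem_range] at hm
      rcases cyl_subset_children (wN n m) hmem with hc | hc
      · exact key n m false hm.1 hm.2 y hc
      · exact key n m true hm.1 hm.2 y hc
    have hUnion : ⋃ n, U n = Ico (0:ℝ) x := by
      apply Subset.antisymm
      · intro y hy
        simp only [hU, Set.mem_iUnion] at hy
        obtain ⟨n, m, hm, hmem⟩ := hy
        rw [Finset.mem_filter, Finset.mem_range] at hm
        obtain ⟨h0w, h12w, h21w⟩ := pts_bdd (wN n m)
        exact ⟨le_trans h0w hmem.1, lt_of_lt_of_le hmem.2 hm.2⟩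
      · intro y hy
        have hyI : y ∈ Ico (0:ℝ) 1 := ⟨hy.1, lt_of_lt_of_le hy.2 hx.2⟩
        obtain ⟨n, hn⟩ := exists_nat_one_div_lt (sub_pos.2 hy.2)
        obtain ⟨m, hm, hw⟩ := wN_surj (wd n y)
        rw [wd_length] at hm hw
        have hymem : y ∈ cyl (wN n m) := hw ▸ mem_cyl_wd hyI n
        have hwidth := cyl_width (wN n m)
        rw [wN_length] at hwidth
        have hble : (pts (wN n m)).2 ≤ x := by
          have hy1 := hymem.1
          linarith
        simp only [Set.mem_iUnion, hU]
        exact ⟨n, m, Finset.mem_filter.2 ⟨Finset.mem_range.2 hm, hble⟩, hymem⟩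
    have hμI : μ (Ico (0:ℝ) x) = ⨆ n, μ (U n) := by
      rw [← hUnion]
      exact hUmono.directed_le.measure_iUnion
    have hνI : ν (Ico (0:ℝ) x) = ⨆ n, ν (U n) := by
      rw [← hUnion]
      exact hUmono.directed_le.measure_iUnion
    rw [hμI, hνI]
    exact iSup_congr hUeq
  refine Measure.ext_of_Ico_finite μ ν (by rw [measure_univ, measure_univ]) ?_
  intro a b hab
  rw [measure_inter_I μ hμ, measure_inter_I ν hν, Set.Ico_inter_Ico]
  set a' := max a 0 with ha'
  set b' := min b 1 with hb'
  rcases le_or_gt b' a' with hba | hab'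
  · rw [Set.Ico_eq_empty (not_lt.2 hba)]
    simp
  · have ha0 : 0 ≤ a' := le_max_right a 0
    have hb1 : b' ≤ 1 := min_le_right b 1
    have hIab : Ico a' b' = Ico (0:ℝ) b' \ Ico (0:ℝ) a' := by
      ext z
      simp only [Set.mem_Ico, Set.mem_diff]
      constructor
      · rintro ⟨h1, h2⟩
        exact ⟨⟨le_trans ha0 h1, h2⟩, fun hc => absurd hc.2 (not_lt.2 h1)⟩
      · rintro ⟨⟨h1, h2⟩, h3⟩
        refine ⟨?_, h2⟩
        by_contra hlt
        exact h3 ⟨h1, lt_of_not_ge hlt⟩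
    have hsub : Ico (0:ℝ) a' ⊆ Ico (0:ℝ) b' := Set.Ico_subset_Ico_right hab'.le
    rw [hIab, measure_diff hsub measurableSet_Ico.nullMeasurableSet (measure_ne_top μ _),
      measure_diff hsub measurableSet_Ico.nullMeasurableSet (measure_ne_top ν _),
      stepA b' ⟨le_trans ha0 hab'.le, hb1⟩, stepA a' ⟨ha0, le_trans hab'.le hb1⟩]

noncomputable def trm (n : ℕ) (x : ℝ) : ℝ := if 1/2 ≤ sig^[n] x then ((2:ℝ)^(n+1))⁻¹ else 0

noncomputable def qmark (x : ℝ) : ℝ := ∑' n, trm n x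

lemma trm_nonneg (n : ℕ) (x : ℝ) : 0 ≤ trm n x := by
  rw [trm]; split <;> positivity

lemma trm_le (n : ℕ) (x : ℝ) : trm n x ≤ ((2:ℝ)^(n+1))⁻¹ := by
  rw [trm]; split
  · exact le_refl _
  · positivity

noncomputable def geo (n : ℕ) : ℝ := ((2:ℝ)^(n+1))⁻¹

lemma summable_geo : Summable geo := by
  have : geo = fun n => (2:ℝ)⁻¹ * ((2:ℝ)⁻¹)^n := by
    funext n; rw [geo, pow_succ, mul_inv, inv_pow]; ring
  rw [this]
  exact (summable_geometric_of_lt_one (by norm_num) (by norm_num)).mul_left _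

lemma tsum_geo : ∑' n, geo n = 1 := by
  have h : geo = fun n => (2:ℝ)⁻¹ * ((2:ℝ)⁻¹)^n := by
    funext n; rw [geo, pow_succ, mul_inv, inv_pow]; ring
  rw [h, tsum_mul_left, tsum_geometric_of_lt_one (by norm_num) (by norm_num)]
  norm_num

lemma summable_trm (x : ℝ) : Summable (fun n => trm n x) :=
  Summable.of_nonneg_of_le (fun n => trm_nonneg n x) (fun n => trm_le n x) summable_geo

lemma qm_nonneg (x : ℝ) : 0 ≤ qmark x :=
  tsum_nonneg (fun n => trm_nonneg n x)

lemma qm_le_one (x : ℝ) : qmark x ≤ 1 := by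
  rw [qmark, ← tsum_geo]
  exact Summable.tsum_le_tsum (fun n => trm_le n x) (summable_trm x) summable_geo

lemma trm_succ (n : ℕ) (x : ℝ) : trm (n+1) x = (2:ℝ)⁻¹ * trm n (sig x) := by
  rw [trm, trm, Function.iterate_succ_apply]
  split
  · rw [pow_succ]
    ring
  · ring

lemma qm_rec (x : ℝ) : qmark x = (if 1/2 ≤ x then (2:ℝ)⁻¹ else 0) + (2:ℝ)⁻¹ * qmark (sig x) := by
  rw [qmark, Summable.tsum_eq_zero_add (summable_trm x)]
  congr 1
  · rw [trm, Function.iterate_zero_apply, pow_one]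
  · simp only [trm_succ]
    rw [tsum_mul_left]
    rfl

lemma sig_zero : sig 0 = 0 := by rw [sig]; norm_num
lemma sig_one : sig 1 = 1 := by rw [sig]; norm_num

lemma qmark_zero : qmark 0 = 0 := by
  have hiter : ∀ n, sig^[n] (0:ℝ) = 0 := by
    intro n; induction n with
    | zero => rfl
    | succ n ih => rw [Function.iterate_succ_apply', ih, sig_zero]
  rw [qmark]
  convert tsum_zero with n
  rw [trm, hiter n, if_neg (by norm_num)]

lemma qmark_one : qmark 1 = 1 := by
  have hiter : ∀ n, sig^[n] (1:ℝ) = 1 := by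
    intro n; induction n with
    | zero => rfl
    | succ n ih => rw [Function.iterate_succ_apply', ih, sig_one]
  have ht : (fun n => trm n (1:ℝ)) = geo := by
    funext n
    rw [trm, hiter n, if_pos (by norm_num), geo]
  rw [qmark, ht, tsum_geo]

lemma qm_sm {a : ℝ} (h : a ∈ Icc (0:ℝ) 1) : qmark (sm a) = qmark a / 2 := by
  rcases lt_or_eq_of_le h.2 with h1 | h1
  · have hmem := sm_mem ⟨h.1, h1⟩
    rw [qm_rec (sm a), if_neg (not_le.2 hmem.2), sig_sm ⟨h.1, h1⟩]
    ring
  · rw [h1, sm_one, qmark_one]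
    have hs : sig (1/2 : ℝ) = 0 := by rw [sig]; norm_num
    rw [qm_rec ((1:ℝ)/2), if_pos (le_refl _), hs, qmark_zero]
    norm_num

lemma qm_um {a : ℝ} (h : a ∈ Icc (0:ℝ) 1) : qmark (um a) = 1/2 + qmark a / 2 := by
  rcases lt_or_eq_of_le h.2 with h1 | h1
  · have hmem := um_mem ⟨h.1, h1⟩
    rw [qm_rec (um a), if_pos hmem.1, sig_um ⟨h.1, h1⟩]
    ring
  · rw [h1, um_one, qmark_one]
    norm_num

lemma sig_iter_mem {x : ℝ} (h : x ∈ Ico (0:ℝ) 1) (n : ℕ) : sig^[n] x ∈ Ico (0:ℝ) 1 := by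
  induction n with
  | zero => exact h
  | succ n ih => rw [Function.iterate_succ_apply']; exact sig_mem ih

lemma floor_um {a : ℝ} (h : a ∈ Ico (0:ℝ) 1) : ⌊1/(1 - um a)⌋ = 1 + ⌊1/(1-a)⌋ := by
  obtain ⟨h0, h1⟩ := h
  have h2a : (0:ℝ) < 2 - a := by linarith
  have h1a : (0:ℝ) < 1 - a := by linarith
  have hx : 1 - um a = (1-a)/(2-a) := by rw [um]; field_simp; ring
  have hinv : 1/(1 - um a) = 1 + 1/(1-a) := by rw [hx]; field_simp; ring
  rw [hinv, add_comm, show (1:ℝ) = ((1:ℤ):ℝ) from by norm_num, Int.floor_add_intCast]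
  ring

lemma exists_dig_false : ∀ k : ℕ, ∀ x ∈ Ico (0:ℝ) 1, ⌊1/(1-x)⌋ ≤ (k:ℤ) → ∃ n, sig^[n] x < 1/2 := by
  intro k
  induction k with
  | zero =>
      intro x hx hfl
      exact absurd (le_trans (floor_facts hx).1 hfl) (by norm_num)
  | succ k ih =>
      intro x hx hfl
      rcases lt_or_ge x (1/2) with hc | hc
      · exact ⟨0, hc⟩
      · obtain ⟨haI, hua⟩ := um_sig ⟨hc, hx.2⟩
        have hfl2 : ⌊1/(1-x)⌋ = 1 + ⌊1/(1 - sig x)⌋ := by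
          conv_lhs => rw [← hua]
          exact floor_um haI
        have : ⌊1/(1 - sig x)⌋ ≤ (k:ℤ) := by
          rw [hfl2] at hfl
          push_cast at hfl ⊢
          linarith
        obtain ⟨n, hn⟩ := ih (sig x) haI this
        exact ⟨n+1, by rwa [Function.iterate_succ_apply]⟩

lemma qm_lt_one {x : ℝ} (hx : x ∈ Ico (0:ℝ) 1) : qmark x < 1 := by
  obtain ⟨k, hk⟩ : ∃ k : ℕ, ⌊1/(1-x)⌋ ≤ (k:ℤ) :=
    ⟨(⌊1/(1-x)⌋).toNat, Int.self_le_toNat _⟩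
  obtain ⟨n, hn⟩ := exists_dig_false k x hx hk
  set g' : ℕ → ℝ := fun i => if i = n then 0 else geo i with hg'
  have hg'sum : Summable g' := by
    apply Summable.of_nonneg_of_le _ _ summable_geo
    · intro i; rw [hg']; dsimp only; split
      · exact le_refl _
      · rw [geo]; positivity
    · intro i; rw [hg']; dsimp only; split
      · rw [geo]; positivity
      · exact le_refl _
  have hgsplit : ∀ i, geo i = (if i = n then geo n else 0) + g' i := by
    intro i
    rw [hg']; dsimp only
    by_cases hi : i = n <;> simp [hi]
  have hsingle : Summable (fun i => if i = n then geo n else 0) :=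
    summable_of_ne_finset_zero (s := {n}) (by intro b hb; simp at hb; simp [hb])
  have htsum : ∑' i, geo i = geo n + ∑' i, g' i := by
    conv_lhs => rw [show geo = fun i => (if i = n then geo n else 0) + g' i from funext hgsplit]
    rw [Summable.tsum_add hsingle hg'sum, tsum_ite_eq]
  have hle : qmark x ≤ ∑' i, g' i := by
    apply Summable.tsum_le_tsum _ (summable_trm x) hg'sum
    intro i
    rw [hg']; dsimp only
    by_cases hi : i = n
    · rw [if_pos hi, hi, trm, if_neg (not_le.2 hn)]
    · rw [if_neg hi]; exact trm_le i x
  have hts : ∑' i, g' i = 1 - geo n := by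
    rw [← tsum_geo]
    linarith [htsum]
  rw [hts] at hle
  have : 0 < geo n := by rw [geo]; positivity
  linarith

lemma sig_lt_sig {x y : ℝ} (hx : x ∈ Ico (0:ℝ) 1) (hy : y ∈ Ico (0:ℝ) 1) (hxy : x < y)
    (hd : (1/2 ≤ x ↔ 1/2 ≤ y)) : sig x < sig y := by
  rcases lt_or_ge x (1/2) with hc | hc
  · have hyc : y < 1/2 := by
      by_contra hyc
      exact absurd (hd.2 (not_lt.1 hyc)) (not_le.2 hc)
    rw [sig, if_pos hc, sig, if_pos hyc]
    rw [div_lt_div_iff₀ (by linarith [hx.1]) (by linarith [hy.1])]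
    nlinarith [hx.1]
  · have hyc : 1/2 ≤ y := hd.1 hc
    rw [sig, if_neg (not_lt.2 hc), sig, if_neg (not_lt.2 hyc)]
    have hx0 : (0:ℝ) < x := by linarith
    have hy0 : (0:ℝ) < y := by linarith
    have : 1/y < 1/x := by
      rw [div_lt_div_iff₀ hy0 hx0]
      linarith
    linarith

lemma dig_eq_iff {a b : ℝ} : dig a = dig b ↔ ((1:ℝ)/2 ≤ a ↔ (1:ℝ)/2 ≤ b) := by
  rw [dig, dig]
  by_cases ha : (1:ℝ)/2 ≤ a <;> by_cases hb : (1:ℝ)/2 ≤ b <;> simp [ha, hb]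

lemma wd_eq_of_digs {n : ℕ} {x y : ℝ}
    (h : ∀ i < n, dig (sig^[i] x) = dig (sig^[i] y)) : wd n x = wd n y := by
  induction n generalizing x y with
  | zero => rfl
  | succ n ih =>
      rw [wd, wd]
      have h0 : dig x = dig y := by
        have := h 0 (by omega)
        simpa using this
      rw [h0]
      congr 1
      apply ih
      intro i hi
      have := h (i+1) (by omega)
      rwa [Function.iterate_succ_apply, Function.iterate_succ_apply] at this

lemma qm_strictMono {x y : ℝ} (hx : x ∈ Ico (0:ℝ) 1) (hy : y ∈ Ico (0:ℝ) 1) (hxy : x < y) :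
    qmark x < qmark y := by
  have hdiff : ∃ i, dig (sig^[i] x) ≠ dig (sig^[i] y) := by
    by_contra hall
    push_neg at hall
    obtain ⟨N, hN⟩ := exists_nat_one_div_lt (sub_pos.2 hxy)
    have hwd : wd N x = wd N y := wd_eq_of_digs (fun i _ => hall i)
    have hmx := mem_cyl_wd hx N
    have hmy := mem_cyl_wd hy N
    rw [hwd] at hmx
    have hwidth := cyl_width (wd N y)
    rw [wd_length] at hwidth
    have h1 := hmx.1
    have h2 := hmx.2
    have h3 := hmy.1
    have h4 := hmy.2
    linarith
  classical
  let i0 := Nat.find hdiff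
  have hspec : dig (sig^[i0] x) ≠ dig (sig^[i0] y) := Nat.find_spec hdiff
  have hmin : ∀ i < i0, dig (sig^[i] x) = dig (sig^[i] y) := by
    intro i hi
    by_contra hne
    exact absurd (Nat.find_min hdiff hi) (not_not.2 hne)
  have key : ∀ j, (∀ i < j, dig (sig^[i] x) = dig (sig^[i] y)) → sig^[j] x < sig^[j] y := by
    intro j
    induction j with
    | zero => intro _; exact hxy
    | succ j ih =>
        intro hpre
        rw [Function.iterate_succ_apply', Function.iterate_succ_apply']
        apply sig_lt_sig (sig_iter_mem hx j) (sig_iter_mem hy j)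
          (ih (fun i hi => hpre i (by omega)))
        exact dig_eq_iff.1 (hpre j (by omega))
  have hAB : sig^[i0] x < sig^[i0] y := key i0 hmin
  set A := sig^[i0] x with hA
  set B := sig^[i0] y with hB
  have hAI : A ∈ Ico (0:ℝ) 1 := sig_iter_mem hx i0
  have hBI : B ∈ Ico (0:ℝ) 1 := sig_iter_mem hy i0
  have hdigA : ¬((1:ℝ)/2 ≤ A) := by
    intro hc
    exact hspec (dig_eq_iff.2 ⟨fun _ => le_trans hc hAB.le, fun _ => hc⟩)
  have hdigB : (1:ℝ)/2 ≤ B := by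
    by_contra hc
    exact hspec (dig_eq_iff.2 ⟨fun h' => le_trans h' hAB.le, fun h' => absurd h' hc⟩)
  have qdiff : ∀ k, (∀ i < k, dig (sig^[i] x) = dig (sig^[i] y)) →
      qmark y - qmark x = (qmark (sig^[k] y) - qmark (sig^[k] x))/2^k := by
    intro k
    induction k with
    | zero => intro _; simp
    | succ k ih =>
        intro hpre
        rw [ih (fun i hi => hpre i (by omega))]
        have hd := dig_eq_iff.1 (hpre k (by omega))
        rw [qm_rec (sig^[k] y), qm_rec (sig^[k] x)]
        rw [Function.iterate_succ_apply', Function.iterate_succ_apply']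
        by_cases hck : (1:ℝ)/2 ≤ sig^[k] x
        · rw [if_pos hck, if_pos (hd.1 hck)]
          rw [pow_succ]
          ring
        · rw [if_neg hck, if_neg (fun hc => hck (hd.2 hc))]
          rw [pow_succ]
          ring
  have hq := qdiff i0 hmin
  rw [← hA, ← hB] at hq
  have hqA : qmark A < 1/2 := by
    rw [qm_rec A, if_neg hdigA]
    have := qm_lt_one (sig_mem hAI)
    linarith
  have hqB : 1/2 ≤ qmark B := by
    rw [qm_rec B, if_pos hdigB]
    have := qm_nonneg (sig B)
    linarith
  have : 0 < (qmark B - qmark A)/2^i0 := div_pos (by linarith) (by positivity)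
  linarith

lemma qm_dyadic : ∀ n m : ℕ, m < 2^n → ∃ x ∈ Ico (0:ℝ) 1, qmark x = m / 2^n := by
  intro n
  induction n with
  | zero =>
      intro m hm
      interval_cases m
      exact ⟨0, by norm_num, by rw [qmark_zero]; norm_num⟩
  | succ n ih =>
      intro m hm
      rcases lt_or_ge m (2^n) with hc | hc
      · obtain ⟨x, hxI, hq⟩ := ih m hc
        have hxc : x ∈ Icc (0:ℝ) 1 := ⟨hxI.1, hxI.2.le⟩
        refine ⟨sm x, ?_, ?_⟩
        · have := sm_mem hxI
          exact ⟨this.1, by linarith [this.2]⟩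
        · rw [qm_sm hxc, hq, pow_succ]
          field_simp
          try ring
      · have hm2 : m - 2^n < 2^n := by
          have h2 : 2^(n+1) = 2^n + 2^n := by rw [pow_succ]; ring
          omega
        obtain ⟨x, hxI, hq⟩ := ih (m - 2^n) hm2
        have hxc : x ∈ Icc (0:ℝ) 1 := ⟨hxI.1, hxI.2.le⟩
        refine ⟨um x, ?_, ?_⟩
        · have := um_mem hxI
          exact ⟨by linarith [this.1], this.2⟩
        · rw [qm_um hxc, hq]
          have hcast : ((m - 2^n : ℕ) : ℝ) = (m:ℝ) - 2^n := by
            push_cast [Nat.cast_sub hc]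
            ring
          rw [hcast, pow_succ]
          have h2n : ((2:ℝ)^n) ≠ 0 := by positivity
          field_simp
          try ring

lemma qm_mono {x y : ℝ} (hx : x ∈ Ico (0:ℝ) 1) (hy : y ∈ Ico (0:ℝ) 1) (h : x ≤ y) :
    qmark x ≤ qmark y := by
  rcases lt_or_eq_of_le h with h' | h'
  · exact (qm_strictMono hx hy h').le
  · rw [h']

lemma dyadic_btwn {α β : ℝ} (hα : 0 ≤ α) (hβ : β ≤ 1) (h : α < β) :
    ∃ n m : ℕ, m < 2^n ∧ α < (m:ℝ)/2^n ∧ (m:ℝ)/2^n < β := by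
  obtain ⟨n, hn⟩ := exists_pow_lt_of_lt_one (sub_pos.2 h) (by norm_num : (1:ℝ)/2 < 1)
  set z := α * 2^n with hz
  have hz0 : 0 ≤ z := by positivity
  have hfl0 : 0 ≤ ⌊z⌋ := Int.floor_nonneg.2 hz0
  set m : ℕ := ⌊z⌋.toNat + 1 with hm
  have hcast : ((m:ℕ):ℝ) = (⌊z⌋:ℝ) + 1 := by
    rw [hm]
    have h1 : ((⌊z⌋.toNat : ℕ) : ℝ) = ((⌊z⌋ : ℤ) : ℝ) := by
      norm_cast
      exact Int.toNat_of_nonneg hfl0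
    push_cast
    simp [h1]
  have h2n : (0:ℝ) < 2^n := by positivity
  have hlt : α < (m:ℝ)/2^n := by
    rw [lt_div_iff₀ h2n, hcast]
    have := Int.lt_floor_add_one z
    rw [hz] at this
    linarith
  have hup : (m:ℝ)/2^n < β := by
    rw [div_lt_iff₀ h2n, hcast]
    have hfle : (⌊z⌋:ℝ) ≤ z := Int.floor_le z
    have hpow : ((1:ℝ)/2)^n * 2^n = 1 := by
      rw [div_pow, one_pow]
      field_simp
    have : ((1:ℝ)/2)^n * 2^n < (β - α) * 2^n := by
      exact mul_lt_mul_of_pos_right hn h2n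
    rw [hpow] at this
    rw [hz] at hfle
    nlinarith
  have hmlt : m < 2^n := by
    have : (m:ℝ) < 2^n := by
      have := lt_of_lt_of_le hup hβ
      rw [div_lt_one h2n] at this
      exact this
    exact_mod_cast this
  exact ⟨n, m, hmlt, hlt, hup⟩

lemma qm_surj {y : ℝ} (hy : y ∈ Ico (0:ℝ) 1) : ∃ c ∈ Ico (0:ℝ) 1, qmark c = y := by
  set A : Set ℝ := {t | t ∈ Ico (0:ℝ) 1 ∧ qmark t ≤ y} with hA
  have h0A : (0:ℝ) ∈ A := ⟨⟨le_refl 0, by norm_num⟩, by rw [qmark_zero]; exact hy.1⟩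
  have hAne : A.Nonempty := ⟨0, h0A⟩
  have hbdd : BddAbove A := ⟨1, fun t ht => ht.1.2.le⟩
  set c := sSup A with hc
  have hc0 : 0 ≤ c := le_csSup hbdd h0A
  -- a dyadic strictly between y and 1
  obtain ⟨n, hn⟩ := exists_pow_lt_of_lt_one (sub_pos.2 hy.2) (by norm_num : (1:ℝ)/2 < 1)
  obtain ⟨t, htI, htq⟩ := qm_dyadic n (2^n - 1) (by have := Nat.one_le_two_pow (n := n); omega)
  have h2n : (0:ℝ) < 2^n := by positivity
  have htq' : y < qmark t := by
    rw [htq]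
    have hcast : ((2^n - 1 : ℕ):ℝ) = (2:ℝ)^n - 1 := by
      push_cast [Nat.cast_sub (Nat.one_le_two_pow (n := n))]
      ring
    rw [hcast]
    have hpow : ((1:ℝ)/2)^n = 1/2^n := by rw [div_pow, one_pow]
    rw [hpow] at hn
    have hmul : (1:ℝ) < (1 - y) * 2^n := by
      rw [← div_lt_iff₀ h2n] at *
      linarith
    rw [lt_div_iff₀ h2n]
    nlinarith
  have hub : ∀ a ∈ A, a < t := by
    intro a ha
    by_contra hc'
    push_neg at hc'
    have := qm_mono htI ha.1 hc'
    linarith [ha.2]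
  have hct : c ≤ t := csSup_le hAne (fun a ha => (hub a ha).le)
  have hc1 : c < 1 := lt_of_le_of_lt hct htI.2
  have hcI : c ∈ Ico (0:ℝ) 1 := ⟨hc0, hc1⟩
  rcases lt_trichotomy (qmark c) y with hlt | heq | hgt
  · exfalso
    obtain ⟨n', m', hm', h1', h2'⟩ := dyadic_btwn (qm_nonneg c) hy.2.le hlt
    obtain ⟨t', ht'I, ht'q⟩ := qm_dyadic n' m' hm'
    have ht'A : t' ∈ A := ⟨ht'I, by rw [ht'q]; linarith⟩
    have hle : t' ≤ c := le_csSup hbdd ht'A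
    have := qm_mono ht'I hcI hle
    rw [ht'q] at this
    linarith
  · exact ⟨c, hcI, heq⟩
  · exfalso
    obtain ⟨n', m', hm', h1', h2'⟩ := dyadic_btwn hy.1 (qm_le_one c) hgt
    obtain ⟨t', ht'I, ht'q⟩ := qm_dyadic n' m' hm'
    have hub' : ∀ a ∈ A, a ≤ t' := by
      intro a ha
      by_contra hc'
      push_neg at hc'
      have := qm_mono ht'I ha.1 hc'.le
      rw [ht'q] at this
      linarith [ha.2]
    have : c ≤ t' := csSup_le hAne hub'
    have := qm_mono hcI ht'I this
    rw [ht'q] at this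
    linarith

noncomputable def QM (x : ℝ) : ℝ := if x < 0 then x else if x < 1 then qmark x else x

lemma QM_ico {x : ℝ} (h : x ∈ Ico (0:ℝ) 1) : QM x = qmark x := by
  rw [QM, if_neg (not_lt.2 h.1), if_pos h.2]

lemma QM_icc {x : ℝ} (h : x ∈ Icc (0:ℝ) 1) : QM x = qmark x := by
  rcases lt_or_eq_of_le h.2 with h1 | h1
  · exact QM_ico ⟨h.1, h1⟩
  · rw [h1, QM, qmark_one, if_neg (by norm_num), if_neg (by norm_num)]

lemma QM_strictMono : StrictMono QM := by
  intro x y hxy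
  rcases lt_or_ge x 0 with hx | hx
  · rw [QM, if_pos hx]
    rcases lt_or_ge y 0 with hy | hy
    · rw [QM, if_pos hy]; exact hxy
    · rcases lt_or_ge y 1 with hy1 | hy1
      · rw [QM, if_neg (not_lt.2 hy), if_pos hy1]
        exact lt_of_lt_of_le hx (qm_nonneg y)
      · rw [QM, if_neg (not_lt.2 hy), if_neg (not_lt.2 hy1)]
        linarith
  · rcases lt_or_ge x 1 with hx1 | hx1
    · rw [QM, if_neg (not_lt.2 hx), if_pos hx1]
      have hy0 : ¬ y < 0 := by push_neg; linarith
      rcases lt_or_ge y 1 with hy1 | hy1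
      · rw [QM, if_neg hy0, if_pos hy1]
        exact qm_strictMono ⟨hx, hx1⟩ ⟨by linarith, hy1⟩ hxy
      · rw [QM, if_neg hy0, if_neg (not_lt.2 hy1)]
        exact lt_of_lt_of_le (qm_lt_one ⟨hx, hx1⟩) hy1
    · rw [QM, if_neg (not_lt.2 hx), if_neg (not_lt.2 hx1)]
      have hy0 : ¬ y < 0 := by push_neg; linarith
      have hy1 : ¬ y < 1 := by push_neg; linarith
      rw [QM, if_neg hy0, if_neg hy1]
      exact hxy

lemma QM_surj : Function.Surjective QM := by
  intro y
  rcases lt_or_ge y 0 with hy | hy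
  · exact ⟨y, by rw [QM, if_pos hy]⟩
  · rcases lt_or_ge y 1 with hy1 | hy1
    · obtain ⟨c, hcI, hcq⟩ := qm_surj ⟨hy, hy1⟩
      exact ⟨c, by rw [QM_ico hcI, hcq]⟩
    · exact ⟨y, by rw [QM, if_neg (by linarith), if_neg (by linarith)]⟩

noncomputable def eIso : ℝ ≃o ℝ := StrictMono.orderIsoOfSurjective QM QM_strictMono QM_surj

lemma eIso_apply (x : ℝ) : eIso x = QM x :=
  congrFun (StrictMono.coe_orderIsoOfSurjective QM QM_strictMono QM_surj) x

lemma eIso_symm_measurable : Measurable (⇑eIso.symm) :=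
  (OrderIso.toHomeomorph eIso.symm).measurable

noncomputable def mu0 : Measure ℝ := Measure.map (⇑eIso.symm) (volume.restrict (Ico (0:ℝ) 1))

instance : IsProbabilityMeasure (volume.restrict (Ico (0:ℝ) 1)) := by
  constructor
  rw [Measure.restrict_apply_univ, Real.volume_Ico]
  norm_num

instance : IsProbabilityMeasure mu0 :=
  Measure.isProbabilityMeasure_map eIso_symm_measurable.aemeasurable

lemma eIso_symm_preimage_Ico (a b : ℝ) : ⇑eIso.symm ⁻¹' (Ico a b) = Ico (QM a) (QM b) := by
  rw [OrderIso.preimage_Ico, OrderIso.symm_symm, eIso_apply, eIso_apply]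

lemma mu0_apply {A : Set ℝ} (hA : MeasurableSet A) :
    mu0 A = (volume.restrict (Ico (0:ℝ) 1)) (⇑eIso.symm ⁻¹' A) :=
  Measure.map_apply eIso_symm_measurable hA

lemma QM_zero : QM 0 = 0 := by
  rw [QM, if_neg (lt_irrefl 0), if_pos (by norm_num : (0:ℝ) < 1), qmark_zero]

lemma QM_one : QM 1 = 1 := by
  rw [QM, if_neg (by norm_num), if_neg (by norm_num)]

lemma mu0_null : mu0 (Ico (0:ℝ) 1)ᶜ = 0 := by
  rw [mu0_apply measurableSet_Ico.compl, Set.preimage_compl, eIso_symm_preimage_Ico,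
    QM_zero, QM_one, Measure.restrict_apply measurableSet_Ico.compl,
    Set.compl_inter_self, measure_empty]

lemma qm_pts (w : List Bool) : qmark (pts w).2 - qmark (pts w).1 = ((1:ℝ)/2)^w.length := by
  induction w with
  | nil =>
      show qmark 1 - qmark 0 = _
      rw [qmark_zero, qmark_one]
      norm_num
  | cons b w ih =>
      obtain ⟨h1, h2⟩ := pts_mem_Icc w
      cases b
      · simp only [pts, cond_false, List.length_cons]
        rw [qm_sm h1, qm_sm h2, pow_succ, ← ih]
        ring
      · simp only [pts, cond_true, List.length_cons]
        rw [qm_um h1, qm_um h2, pow_succ, ← ih]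
        ring

lemma ofReal_half_pow (n : ℕ) : ENNReal.ofReal (((1:ℝ)/2)^n) = ((2:ℝ≥0∞)^n)⁻¹ := by
  rw [div_pow, one_pow, one_div, ENNReal.ofReal_inv_of_pos (by positivity),
    ENNReal.ofReal_pow (by norm_num)]
  norm_num

lemma mu0_cyl (w : List Bool) : mu0 (cyl w) = ((2:ℝ≥0∞)^w.length)⁻¹ := by
  obtain ⟨hm1, hm2⟩ := pts_mem_Icc w
  rw [show cyl w = Ico (pts w).1 (pts w).2 from rfl,
    mu0_apply measurableSet_Ico, eIso_symm_preimage_Ico, QM_icc hm1, QM_icc hm2,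
    Measure.restrict_apply measurableSet_Ico]
  have hsub : Ico (qmark (pts w).1) (qmark (pts w).2) ∩ Ico (0:ℝ) 1
      = Ico (qmark (pts w).1) (qmark (pts w).2) := by
    apply Set.inter_eq_left.2
    intro z hz
    exact ⟨le_trans (qm_nonneg _) hz.1, lt_of_lt_of_le hz.2 (qm_le_one _)⟩
  rw [hsub, Real.volume_Ico, qm_pts w]
  exact ofReal_half_pow _

lemma wsucc_surj (w : List Bool) : ∃ v : List Bool, v.length = w.length ∧ wsucc v = w := by
  obtain ⟨m, hm, hw⟩ := wN_surj w
  rcases Nat.eq_zero_or_pos m with h0 | hpos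
  · subst h0
    refine ⟨wN w.length (2^w.length - 1), by simp, ?_⟩
    rw [wsucc_wN_last]
    exact hw
  · refine ⟨wN w.length (m - 1), by simp, ?_⟩
    have hlt : (m - 1) + 1 < 2^w.length := by omega
    rw [wsucc_wN hlt, show m - 1 + 1 = m from by omega, hw]

lemma preimage_cyl (v : List Bool) :
    renyiOdometer ⁻¹' (cyl (wsucc v)) ∩ Ico (0:ℝ) 1 = cyl v := by
  ext x
  constructor
  · rintro ⟨hp, hI⟩
    exact (pre v x hI).1 hp
  · intro hx
    have hI := cyl_subset v hx
    exact ⟨(pre v x hI).2 hx, hI⟩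

lemma T_measurable : Measurable renyiOdometer := by
  have h1 : Measurable fun x : ℝ => 1/(1-x) := by
    simp_rw [one_div]
    exact (measurable_const.sub measurable_id).inv
  have hcast : Measurable fun z : ℤ => (z : ℝ) := measurable_from_top
  have h2 : Measurable fun x : ℝ => (⌊1/(1-x)⌋ : ℝ) := hcast.comp h1.floor
  have h3 : Measurable fun x : ℝ => 2*(⌊1/(1-x)⌋:ℝ) + 1 - 1/(1-x) :=
    (((h2.const_mul 2).add_const 1).sub h1)
  exact measurable_const.div h3

lemma mu0_preserving : MeasurePreserving renyiOdometer mu0 mu0 := by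
  refine ⟨T_measurable, ?_⟩
  haveI : IsProbabilityMeasure (Measure.map renyiOdometer mu0) :=
    Measure.isProbabilityMeasure_map T_measurable.aemeasurable
  apply ext_measures _ _ ?_ mu0_null
  · intro w
    rw [Measure.map_apply T_measurable (measurable_cyl w)]
    obtain ⟨v, hvlen, hv⟩ := wsucc_surj w
    rw [← hv, measure_inter_I mu0 mu0_null, preimage_cyl v, mu0_cyl, mu0_cyl,
      wsucc_length, hvlen]
  · rw [Measure.map_apply T_measurable measurableSet_Ico.compl,
      measure_inter_I mu0 mu0_null]
    have hempty : renyiOdometer ⁻¹' (Ico (0:ℝ) 1)ᶜ ∩ Ico (0:ℝ) 1 = ∅ := by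
      apply Set.eq_empty_iff_forall_notMem.2
      rintro x ⟨hp, hI⟩
      exact hp ((T_mem hI).1)
    rw [hempty, measure_empty]

end RO

/-- `O_R : [0,1) → [0,1)` is uniquely ergodic: there is exactly one
`O_R`-invariant Borel probability measure on `[0,1)` (i.e. exactly one invariant
Borel probability measure concentrated on `[0,1)`). -/
theorem renyiOdometer_uniquelyErgodic :
    ∃! μ : Measure ℝ,
      IsProbabilityMeasure μ ∧ μ (Set.Ico (0 : ℝ) 1)ᶜ = 0 ∧
        MeasurePreserving renyiOdometer μ μ := by
  refine ⟨RO.mu0, ⟨inferInstance, RO.mu0_null, RO.mu0_preserving⟩, ?_⟩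
  rintro μ ⟨h1, h2, h3⟩
  haveI := h1
  apply RO.ext_measures μ RO.mu0 h2 RO.mu0_null
  intro w
  rw [RO.measure_cyl_of_invariant μ h2 h3 w, RO.mu0_cyl]
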